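/- Fix t ∈ (0, t_max]. Assume the survival model, that the gradient ∇_θΛ exists and is jointly continuous on Θ × [0,t_max] with each component s ↦ ∂Λ/∂θ_j(θ,s) monotone for every θ and ‖∇_θΛ(θ,s)‖ uniformly bounded on Θ × [0,t_max], that θ̂^{(m)} → θ_A in probability with (θ̂^{(m)}) independent of the group-B data, and that (Σ̂_k)_{k≥1} is a sequence of random q×q matrices with Σ̂_k → Σ in probability for a fixed q×q matrix Σ. Then, in the asymptotic regime, the estimated additional variance V̂₂(t) := π_k · ḡ_kᵀ Σ̂_k ḡ_k, with ḡ_k := (1/n_B(k)) ∑_{i=1}^{n_B(k)} ∇_θΛ(θ̂_A, min(t, X_{B,i})) and π_k := n_B(k)/n_A(k), converges in probability, as k → ∞, to V₂(t) = π · E[∇_θΛ(θ_A, min(t,X_{B,1}))]ᵀ Σ E[∇_θΛ(θ_A, min(t,X_{B,1}))]. -/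

import Mathlib

/-!
The empirical mean of `∇_θΛ(θ_A, min(t, X_{B,i}))` converges by the strong law of large numbers:
the summands are bounded i.i.d. functions of `(T_{B,i}, C_{B,i})`. Substituting `θ̂_A` for `θ_A`
moves every summand by at most the uniform modulus of continuity of `∇_θΛ` near `θ_A` on the
compact time range `[0, t_max]`, which is small as soon as `θ̂_A` is close to `θ_A`, an event of
probability tending to one. Finally `V̂₂(t)` is a continuous function of `(n_B/n_A, ḡ_k, Σ̂_k)`,
all three converging in probability to constants, so the continuous mapping theorem applies.
-/

open MeasureTheory ProbabilityTheory Filter Topology Set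

section ConvergenceInMeasure

variable {Ω ι : Type*} [MeasurableSpace Ω] {μ : Measure Ω} {l : Filter ι}

theorem MeasureTheory.tendsto_measure_zero_of_le {s : ι → Set Ω} {b : ι → ENNReal}
    (hb : Tendsto b l (𝓝 0)) (hsb : ∀ i, μ (s i) ≤ b i) : Tendsto (fun i => μ (s i)) l (𝓝 0) :=
  tendsto_of_tendsto_of_tendsto_of_le_of_le tendsto_const_nhds hb (fun _ => zero_le) hsb

theorem MeasureTheory.TendstoInMeasure.comp_continuousAt {E F : Type*} [PseudoMetricSpace E]
    [PseudoMetricSpace F] {f : ι → Ω → E} {c : E} (hf : TendstoInMeasure μ f l fun _ => c)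
    {g : E → F} (hg : ContinuousAt g c) :
    TendstoInMeasure μ (fun i ω => g (f i ω)) l fun _ => g c := by
  rw [tendstoInMeasure_iff_dist] at hf ⊢
  intro ε hε
  obtain ⟨δ, hδ, hgδ⟩ := Metric.continuousAt_iff.mp hg ε hε
  refine tendsto_measure_zero_of_le (hf δ hδ) fun i => measure_mono fun ω hω => ?_
  by_contra h
  exact (not_le.mpr (hgδ (not_le.mp h))) hω

theorem MeasureTheory.TendstoInMeasure.prodMk {E F : Type*} [PseudoMetricSpace E]
    [PseudoMetricSpace F] {f : ι → Ω → E} {g : ι → Ω → F} {a : E} {b : F}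
    (hf : TendstoInMeasure μ f l fun _ => a) (hg : TendstoInMeasure μ g l fun _ => b) :
    TendstoInMeasure μ (fun i ω => (f i ω, g i ω)) l fun _ => (a, b) := by
  rw [tendstoInMeasure_iff_dist] at hf hg ⊢
  intro ε hε
  have hsum := (hf ε hε).add (hg ε hε)
  rw [add_zero] at hsum
  refine tendsto_measure_zero_of_le hsum fun i =>
    (measure_mono fun ω hω => ?_).trans (measure_union_le _ _)
  simpa only [mem_union, mem_ofPred_eq, Prod.dist_eq, le_max_iff] using hω

theorem MeasureTheory.tendstoInMeasure_pi {κ : Type*} [Fintype κ] {E : κ → Type*}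
    [∀ j, PseudoMetricSpace (E j)] {f : ι → Ω → ∀ j, E j} {c : ∀ j, E j}
    (hf : ∀ j, TendstoInMeasure μ (fun i ω => f i ω j) l fun _ => c j) :
    TendstoInMeasure μ f l fun _ => c := by
  simp only [tendstoInMeasure_iff_dist] at hf ⊢
  intro ε hε
  have hsum := tendsto_finsetSum Finset.univ fun j _ => hf j ε hε
  rw [Finset.sum_const_zero] at hsum
  refine tendsto_measure_zero_of_le hsum fun i =>
    (measure_mono fun ω hω => ?_).trans (measure_iUnion_fintype_le μ _)
  by_contra h
  simp only [mem_iUnion, mem_ofPred_eq, not_exists, not_le] at h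
  exact not_lt.mpr hω ((dist_pi_lt_iff hε).mpr h)

theorem Filter.Tendsto.tendstoInMeasure_const {E : Type*} [PseudoMetricSpace E] {a : ι → E}
    {c : E} (ha : Tendsto a l (𝓝 c)) : TendstoInMeasure μ (fun i _ => a i) l fun _ => c := by
  rw [tendstoInMeasure_iff_dist]
  intro ε hε
  refine tendsto_const_nhds.congr' ?_
  filter_upwards [Metric.tendsto_nhds.mp ha ε hε] with i hi
  simp [not_le.mpr hi]

theorem MeasureTheory.TendstoInMeasure.of_forall_dist_lt {E Θ : Type*} [PseudoMetricSpace E]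
    [PseudoMetricSpace Θ] {f g : ι → Ω → E} {c : E} {θ : ι → Ω → Θ} {θ₀ : Θ}
    (hg : TendstoInMeasure μ g l fun _ => c) (hθ : TendstoInMeasure μ θ l fun _ => θ₀)
    (hfg : ∀ ε > 0, ∃ δ > 0, ∀ i ω, dist (θ i ω) θ₀ < δ → dist (f i ω) (g i ω) < ε) :
    TendstoInMeasure μ f l fun _ => c := by
  rw [tendstoInMeasure_iff_dist] at hg hθ ⊢
  intro ε hε
  obtain ⟨δ, hδ, hclose⟩ := hfg (ε / 2) (half_pos hε)
  have hsum := (hg (ε / 2) (half_pos hε)).add (hθ δ hδ)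
  rw [add_zero] at hsum
  refine tendsto_measure_zero_of_le hsum fun i =>
    (measure_mono fun ω hω => ?_).trans (measure_union_le _ _)
  by_contra h
  simp only [mem_union, mem_ofPred_eq, not_or, not_le] at h hω
  linarith [dist_triangle (f i ω) (g i ω) c, hclose i ω h.2]

end ConvergenceInMeasure

theorem dist_smul_sum_range_le {E : Type*} [SeminormedAddCommGroup E] [NormedSpace ℝ E]
    {a b : ℕ → E} {n : ℕ} {ε : ℝ} (hε : 0 ≤ ε) (hab : ∀ i < n, dist (a i) (b i) ≤ ε) :
    dist ((n : ℝ)⁻¹ • ∑ i ∈ Finset.range n, a i) ((n : ℝ)⁻¹ • ∑ i ∈ Finset.range n, b i) ≤ ε := by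
  rcases n.eq_zero_or_pos with rfl | hn
  · simpa using hε
  have hsum : dist (∑ i ∈ Finset.range n, a i) (∑ i ∈ Finset.range n, b i) ≤ n * ε := by
    simpa using dist_sum_sum_le_of_le (Finset.range n) fun i hi => hab i (Finset.mem_range.mp hi)
  rw [dist_smul₀, norm_inv, Real.norm_natCast, inv_mul_le_iff₀ (by positivity)]
  exact hsum

theorem ContinuousOn.tendstoUniformlyOn_of_isCompact {α β γ : Type*} [UniformSpace α]
    [LocallyCompactSpace α] [UniformSpace β] [UniformSpace γ] {f : α → β → γ} {x : α}
    {U : Set α} {K : Set β} (hU : U ∈ 𝓝 x) (hK : IsCompact K) (hf : ContinuousOn ↿f (U ×ˢ K)) :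
    TendstoUniformlyOn f (f x) (𝓝 x) K := by
  obtain ⟨L, hxL, hLU, hL⟩ := LocallyCompactSpace.local_compact_nhds _ _ hU
  have hunif : UniformContinuousOn ↿f (L ×ˢ K) :=
    (hL.prod hK).uniformContinuousOn_of_continuous (hf.mono (prod_mono hLU subset_rfl))
  simpa only [nhdsWithin_eq_nhds.2 hxL] using hunif.tendstoUniformlyOn (mem_of_mem_nhds hxL)

section PlugIn

variable {Ω ι Θ S E : Type*} [MeasurableSpace Ω] {μ : Measure Ω} {l : Filter ι}
  [PseudoMetricSpace Θ] [SeminormedAddCommGroup E] [NormedSpace ℝ E]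

theorem TendstoUniformlyOn.tendstoInMeasure_average_plugIn {F : Θ → S → E} {θ₀ : Θ} {K : Set S}
    (hF : TendstoUniformlyOn F (F θ₀) (𝓝 θ₀) K) {X : ℕ → Ω → S} (hX : ∀ i ω, X i ω ∈ K)
    {θ : ι → Ω → Θ} (hθ : TendstoInMeasure μ θ l fun _ => θ₀) {n : ι → ℕ} {c : E}
    (hlim : TendstoInMeasure μ
      (fun k ω => (n k : ℝ)⁻¹ • ∑ i ∈ Finset.range (n k), F θ₀ (X i ω)) l fun _ => c) :
    TendstoInMeasure μ
      (fun k ω => (n k : ℝ)⁻¹ • ∑ i ∈ Finset.range (n k), F (θ k ω) (X i ω)) l fun _ => c := by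
  refine hlim.of_forall_dist_lt hθ fun ε hε => ?_
  obtain ⟨δ, hδ, hclose⟩ := Metric.eventually_nhds_iff.mp
    (Metric.tendstoUniformlyOn_iff.mp hF (ε / 2) (half_pos hε))
  refine ⟨δ, hδ, fun k ω hk => ?_⟩
  refine (dist_smul_sum_range_le (half_pos hε).le fun i _ => ?_).trans_lt (half_lt_self hε)
  rw [dist_comm]
  exact (hclose hk (X i ω) (hX i ω)).le

end PlugIn

theorem ProbabilityTheory.strong_law_comp_tendstoInMeasure {Ω ι β E : Type*} [MeasurableSpace Ω]
    {μ : Measure Ω} [IsProbabilityMeasure μ] {l : Filter ι} [MeasurableSpace β]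
    [NormedAddCommGroup E] [NormedSpace ℝ E] [CompleteSpace E] [MeasurableSpace E] [BorelSpace E]
    {Z : ℕ → Ω → β} (hZ : ∀ i, Measurable (Z i)) (hindep : iIndepFun Z μ)
    (hident : ∀ i, μ.map (Z i) = μ.map (Z 0)) {φ : β → E} (hφ : Measurable φ)
    (hint : Integrable (fun ω => φ (Z 0 ω)) μ) {n : ι → ℕ} (hn : Tendsto n l atTop) :
    TendstoInMeasure μ (fun k ω => (n k : ℝ)⁻¹ • ∑ i ∈ Finset.range (n k), φ (Z i ω)) l
      fun _ => ∫ ω, φ (Z 0 ω) ∂μ := by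
  have hY_indep : Pairwise (Function.onFun (· ⟂ᵢ[μ] ·) fun i ω => φ (Z i ω)) := fun i j hij =>
    (hindep.comp (fun _ => φ) fun _ => hφ).indepFun hij
  have hY_ident : ∀ i, IdentDistrib (fun ω => φ (Z i ω)) (fun ω => φ (Z 0 ω)) μ μ := fun i =>
    (IdentDistrib.mk (hZ i).aemeasurable (hZ 0).aemeasurable (hident i)).comp hφ
  have hY_int : ∀ i, Integrable (fun ω => φ (Z i ω)) μ := fun i =>
    (hY_ident i).integrable_iff.mpr hint
  refine (tendstoInMeasure_of_tendsto_ae (fun k => ?_)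
    (strong_law_ae _ hint hY_indep hY_ident)).comp hn
  exact (Finset.aestronglyMeasurable_fun_sum _ fun i _ =>
    (hY_int i).aestronglyMeasurable).const_smul (k : ℝ)⁻¹

section IccExtend

variable {Ω ι β E : Type*} [MeasurableSpace Ω] {μ : Measure Ω} {l : Filter ι}
  [NormedAddCommGroup E] {a b : ℝ} {g : ℝ → E}

theorem ContinuousOn.integrable_comp_of_mem_Icc [IsFiniteMeasure μ] (hab : a ≤ b)
    (hg : ContinuousOn g (Icc a b)) {C : ℝ} (hC : ∀ s ∈ Icc a b, ‖g s‖ ≤ C) {X : Ω → ℝ}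
    (hX : Measurable X) (hmem : ∀ ω, X ω ∈ Icc a b) : Integrable (fun ω => g (X ω)) μ := by
  have hext : (fun ω => g (X ω)) = IccExtend hab ((Icc a b).domRestrict g) ∘ X :=
    funext fun ω => (IccExtend_of_mem hab ((Icc a b).domRestrict g) (hmem ω)).symm
  refine .of_bound ?_ C (ae_of_all _ fun ω => hC _ (hmem ω))
  rw [hext]
  exact (continuous_IccExtend_iff.mpr hg.domRestrict).comp_aestronglyMeasurable
    hX.aestronglyMeasurable

theorem ProbabilityTheory.strong_law_comp_Icc_tendstoInMeasure [IsProbabilityMeasure μ]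
    [NormedSpace ℝ E] [CompleteSpace E] [MeasurableSpace E] [BorelSpace E] [MeasurableSpace β]
    {Z : ℕ → Ω → β} (hZ : ∀ i, Measurable (Z i)) (hindep : iIndepFun Z μ)
    (hident : ∀ i, μ.map (Z i) = μ.map (Z 0)) {f : β → ℝ} (hf : Measurable f) (hab : a ≤ b)
    (hmem : ∀ i ω, f (Z i ω) ∈ Icc a b) (hg : ContinuousOn g (Icc a b))
    (hint : Integrable (fun ω => g (f (Z 0 ω))) μ) {n : ι → ℕ} (hn : Tendsto n l atTop) :
    TendstoInMeasure μ (fun k ω => (n k : ℝ)⁻¹ • ∑ i ∈ Finset.range (n k), g (f (Z i ω))) l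
      fun _ => ∫ ω, g (f (Z 0 ω)) ∂μ := by
  -- `g` itself need not be measurable; its constant extension beyond `[a, b]` is continuous
  have hG : ∀ i ω, IccExtend hab ((Icc a b).domRestrict g) (f (Z i ω)) = g (f (Z i ω)) :=
    fun i ω => IccExtend_of_mem hab _ (hmem i ω)
  have hlaw := strong_law_comp_tendstoInMeasure hZ hindep hident
    (((continuous_IccExtend_iff (h := hab)).mpr hg.domRestrict).measurable.comp hf)
    (by simpa only [Function.comp_apply, hG] using hint) hn
  simpa only [Function.comp_apply, hG] using hlaw

end IccExtend

theorem stmt8_general {q : ℕ}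
    -- survival model
    (Θ : Set (Fin q → ℝ)) (hΘopen : IsOpen Θ) (θA : Fin q → ℝ) (hθA : θA ∈ Θ)
    (tmax : ℝ)
    {Ω : Type*} [MeasurableSpace Ω] (P : Measure Ω) [IsProbabilityMeasure P]
    (T C : ℕ → Ω → ℝ)
    (hT : ∀ i, Measurable (T i)) (hC : ∀ i, Measurable (C i))
    (hTnonneg : ∀ i ω, 0 ≤ T i ω) (hCnonneg : ∀ i ω, 0 ≤ C i ω)
    (hiid : iIndepFun (fun i ω => (T i ω, C i ω)) P)
    (hident : ∀ i, P.map (fun ω => (T i ω, C i ω)) = P.map (fun ω => (T 0 ω, C 0 ω)))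
    -- the fixed time point
    (t : ℝ) (ht : t ∈ Ioc 0 tmax)
    -- gradient assumptions
    (gradΛ : (Fin q → ℝ) → ℝ → (Fin q → ℝ))
    (hgradcont : ContinuousOn (fun p : (Fin q → ℝ) × ℝ => gradΛ p.1 p.2) (Θ ×ˢ Icc 0 tmax))
    (Cg : ℝ) (hgradbdd : ∀ θ ∈ Θ, ∀ s ∈ Icc 0 tmax, ‖gradΛ θ s‖ ≤ Cg)
    -- estimator assumptions
    (θhat : ℕ → Ω → (Fin q → ℝ))
    (hθhatprob : TendstoInMeasure P θhat atTop (fun _ => θA))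
    -- covariance matrix estimators
    (Sig : Matrix (Fin q) (Fin q) ℝ)
    (Sighat : ℕ → Ω → Matrix (Fin q) (Fin q) ℝ)
    (hSighatprob : ∀ i j,
      TendstoInMeasure P (fun k ω => Sighat k ω i j) atTop (fun _ => Sig i j))
    -- asymptotic regime
    (nA nB : ℕ → ℕ) (hnA : Tendsto nA atTop atTop) (hnB : Tendsto nB atTop atTop)
    (π : ℝ)
    (hratio : Tendsto (fun k => (nB k : ℝ) / (nA k : ℝ)) atTop (𝓝 π))
    -- the limiting additional variance
    (V₂ : ℝ)
    (hV₂ : V₂ = π * dotProduct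
        (fun j => ∫ ω, gradΛ θA (min t (min (T 0 ω) (C 0 ω))) j ∂P)
        (Sig.mulVec (fun j => ∫ ω, gradΛ θA (min t (min (T 0 ω) (C 0 ω))) j ∂P))) :
    TendstoInMeasure P
      (fun k ω => ((nB k : ℝ) / (nA k : ℝ)) * dotProduct
        (fun j => (nB k : ℝ)⁻¹ *
          ∑ i ∈ Finset.range (nB k), gradΛ (θhat (nA k) ω) (min t (min (T i ω) (C i ω))) j)
        ((Sighat k ω).mulVec
          (fun j => (nB k : ℝ)⁻¹ *
            ∑ i ∈ Finset.range (nB k),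
              gradΛ (θhat (nA k) ω) (min t (min (T i ω) (C i ω))) j)))
      atTop (fun _ => V₂) := by
  have h0 : 0 ≤ tmax := ht.1.le.trans ht.2
  have hX : ∀ i ω, min t (min (T i ω) (C i ω)) ∈ Icc 0 tmax := fun i ω =>
    ⟨le_min ht.1.le (le_min (hTnonneg i ω) (hCnonneg i ω)), (min_le_left _ _).trans ht.2⟩
  have hslice : ContinuousOn (gradΛ θA) (Icc 0 tmax) :=
    hgradcont.comp (f := fun s => (θA, s)) (by fun_prop) fun s hs => ⟨hθA, hs⟩
  have hint : Integrable (fun ω => gradΛ θA (min t (min (T 0 ω) (C 0 ω)))) P :=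
    hslice.integrable_comp_of_mem_Icc h0 (hgradbdd θA hθA) (by fun_prop) (hX 0)
  have hA := strong_law_comp_Icc_tendstoInMeasure (fun i => (hT i).prodMk (hC i)) hiid hident
    (f := fun p => min t (min p.1 p.2)) (by fun_prop) h0 hX hslice hint hnB
  have hgbar := (hgradcont.tendstoUniformlyOn_of_isCompact (hΘopen.mem_nhds hθA)
    isCompact_Icc).tendstoInMeasure_average_plugIn hX (hθhatprob.comp hnA) hA
  -- `Matrix` carries no metric, so `Sighat` is read as a function `Fin q → Fin q → ℝ`
  have hSig : TendstoInMeasure (E := Fin q → Fin q → ℝ) P Sighat atTop fun _ => Sig :=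
    tendstoInMeasure_pi fun i => tendstoInMeasure_pi fun j => hSighatprob i j
  have hV := ((hratio.tendstoInMeasure_const.prodMk hgbar).prodMk hSig).comp_continuousAt
    (g := fun p : (ℝ × (Fin q → ℝ)) × (Fin q → Fin q → ℝ) =>
      p.1.1 * dotProduct p.1.2 (Matrix.mulVec p.2 p.1.2))
    (by fun_prop : Continuous _).continuousAt
  have havg : ∀ (n : ℕ) (v : ℕ → Fin q → ℝ), (n : ℝ)⁻¹ • ∑ i ∈ Finset.range n, v i =
      fun j => (n : ℝ)⁻¹ * ∑ i ∈ Finset.range n, v i j := fun n v => by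
    ext j
    simp only [Pi.smul_apply, Finset.sum_apply, smul_eq_mul]
  have hmean : ∫ ω, gradΛ θA (min t (min (T 0 ω) (C 0 ω))) ∂P =
      fun j => ∫ ω, gradΛ θA (min t (min (T 0 ω) (C 0 ω))) j ∂P :=
    funext (eval_integral hint.eval)
  simp only [havg, hmean] at hV
  exact hV₂ ▸ hV

/-- Under the parametric survival model, joint continuity, componentwise
monotonicity (in `s`) and uniform boundedness of the gradient `∇_θΛ` on `Θ × [0,tmax]`,
consistency of the estimator sequence (independent of the group-B data), and entrywise
consistency `Σ̂_k → Σ` in probability, the estimated additional variance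
`V̂₂(t) = (n_B(k)/n_A(k)) · ḡ_kᵀ Σ̂_k ḡ_k` converges in probability to
`V₂(t) = π · E[∇_θΛ(θ_A, min(t,X₁))]ᵀ Σ E[∇_θΛ(θ_A, min(t,X₁))]`. -/
theorem stmt8 {q : ℕ}
    -- survival model
    (Θ : Set (Fin q → ℝ)) (hΘopen : IsOpen Θ) (θA : Fin q → ℝ) (hθA : θA ∈ Θ)
    (Λ : (Fin q → ℝ) → ℝ → ℝ)
    (hΛcont : ContinuousOn (fun p : (Fin q → ℝ) × ℝ => Λ p.1 p.2) (Θ ×ˢ Ici 0))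
    (hΛ0 : ∀ θ ∈ Θ, Λ θ 0 = 0)
    (hΛmono : ∀ θ ∈ Θ, MonotoneOn (Λ θ) (Ici 0))
    (hΛnonneg : ∀ θ ∈ Θ, ∀ s ∈ Ici (0 : ℝ), 0 ≤ Λ θ s)
    (tmax : ℝ) (htmax : 0 < tmax)
    {Ω : Type*} [MeasurableSpace Ω] (P : Measure Ω) [IsProbabilityMeasure P]
    (T C : ℕ → Ω → ℝ)
    (hT : ∀ i, Measurable (T i)) (hC : ∀ i, Measurable (C i))
    (hTnonneg : ∀ i ω, 0 ≤ T i ω) (hCnonneg : ∀ i ω, 0 ≤ C i ω)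
    (hiid : iIndepFun (fun i ω => (T i ω, C i ω)) P)
    (hident : ∀ i, P.map (fun ω => (T i ω, C i ω)) = P.map (fun ω => (T 0 ω, C 0 ω)))
    (hTC : ∀ i, IndepFun (T i) (C i) P)
    (hsurv : ∀ i, ∀ s ∈ Ici (0 : ℝ),
      P {ω | s < T i ω} = ENNReal.ofReal (Real.exp (-(Λ θA s))))
    (hXle : ∀ i, ∀ᵐ ω ∂P, min (T i ω) (C i ω) ≤ tmax)
    -- the fixed time point
    (t : ℝ) (ht : t ∈ Ioc 0 tmax)
    -- gradient assumptions
    (gradΛ : (Fin q → ℝ) → ℝ → (Fin q → ℝ))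
    (hgrad : ∀ θ ∈ Θ, ∀ s ∈ Icc 0 tmax,
      HasFDerivAt (fun θ' => Λ θ' s)
        (∑ j, gradΛ θ s j • (ContinuousLinearMap.proj j : (Fin q → ℝ) →L[ℝ] ℝ)) θ)
    (hgradcont : ContinuousOn (fun p : (Fin q → ℝ) × ℝ => gradΛ p.1 p.2) (Θ ×ˢ Icc 0 tmax))
    (hgradmono : ∀ θ ∈ Θ, ∀ j : Fin q,
      MonotoneOn (fun s => gradΛ θ s j) (Icc 0 tmax)
        ∨ AntitoneOn (fun s => gradΛ θ s j) (Icc 0 tmax))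
    (Cg : ℝ) (hgradbdd : ∀ θ ∈ Θ, ∀ s ∈ Icc 0 tmax, ‖gradΛ θ s‖ ≤ Cg)
    -- estimator assumptions
    (θhat : ℕ → Ω → (Fin q → ℝ))
    (hθhatmeas : ∀ m, Measurable (θhat m))
    (hθhatΘ : ∀ m ω, θhat m ω ∈ Θ)
    (hθhatindep : IndepFun (fun ω => fun m => θhat m ω) (fun ω => fun i => (T i ω, C i ω)) P)
    (hθhatprob : TendstoInMeasure P θhat atTop (fun _ => θA))
    -- covariance matrix estimators
    (Sig : Matrix (Fin q) (Fin q) ℝ)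
    (Sighat : ℕ → Ω → Matrix (Fin q) (Fin q) ℝ)
    (hSighatmeas : ∀ k i j, Measurable (fun ω => Sighat k ω i j))
    (hSighatprob : ∀ i j,
      TendstoInMeasure P (fun k ω => Sighat k ω i j) atTop (fun _ => Sig i j))
    -- asymptotic regime
    (nA nB : ℕ → ℕ) (hnA : Tendsto nA atTop atTop) (hnB : Tendsto nB atTop atTop)
    (π : ℝ) (hπ : 0 < π)
    (hratio : Tendsto (fun k => (nB k : ℝ) / (nA k : ℝ)) atTop (𝓝 π))
    -- the limiting additional variance
    (V₂ : ℝ)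
    (hV₂ : V₂ = π * dotProduct
        (fun j => ∫ ω, gradΛ θA (min t (min (T 0 ω) (C 0 ω))) j ∂P)
        (Sig.mulVec (fun j => ∫ ω, gradΛ θA (min t (min (T 0 ω) (C 0 ω))) j ∂P))) :
    TendstoInMeasure P
      (fun k ω => ((nB k : ℝ) / (nA k : ℝ)) * dotProduct
        (fun j => (nB k : ℝ)⁻¹ *
          ∑ i ∈ Finset.range (nB k), gradΛ (θhat (nA k) ω) (min t (min (T i ω) (C i ω))) j)
        ((Sighat k ω).mulVec
          (fun j => (nB k : ℝ)⁻¹ *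
            ∑ i ∈ Finset.range (nB k),
              gradΛ (θhat (nA k) ω) (min t (min (T i ω) (C i ω))) j)))
      atTop (fun _ => V₂) :=
  stmt8_general Θ hΘopen θA hθA tmax P T C hT hC hTnonneg hCnonneg hiid hident t ht gradΛ hgradcont
    Cg hgradbdd θhat hθhatprob Sig Sighat hSighatprob nA nB hnA hnB π hratio V₂ hV₂
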